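/- Let 1/2 < δ < 1 and 0 < ρ < 2 - 1/δ. Let k, N : ℕ → ℕ satisfy k(d) < d < N(d), and set δ_d := d/N(d) and ρ_d := k(d)/d, with δ_d → δ and ρ_d → ρ as d → ∞. Define Δ_C(d) := binom(N(d), k(d)) · (1 - Q_{d,k(d)}(N(d))). Then there exist real numbers 0 < a ≤ b and D ∈ ℕ such that for all d ≥ D: a ≤ N(d) · exp(-N(d)·G(δ_d, ρ_d)) · Δ_C(d) ≤ b. In particular, if G(δ,ρ) < 0 then Δ_C(d) → 0 and if G(δ,ρ) > 0 then Δ_C(d) → ∞ as d → ∞. -/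

import Mathlib

open Filter Finset Real Topology

/-- `Q d k N = 2^k · (Σ_{i=0}^{d-k-1} C(N-k-1, i)) / (Σ_{i=0}^{d-1} C(N-1, i))`,
the normalized expected `k`-face number `E f_k(C_N)/C(N,k)` of the Cover–Efron cone. -/
noncomputable def Q (d k N : ℕ) : ℝ :=
  2 ^ k * (∑ i ∈ Finset.range (d - k), ((N - k - 1).choose i : ℝ)) /
    (∑ i ∈ Finset.range d, ((N - 1).choose i : ℝ))

/-- The binary entropy function `H(x) = -x log x - (1-x) log(1-x)` (natural logarithm;
note `Real.log 0 = 0`, so the convention `0 · log 0 = 0` is automatic). -/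
noncomputable def binEnt (x : ℝ) : ℝ :=
  -x * Real.log x - (1 - x) * Real.log (1 - x)

/-- `G(x,y) = H(x) + x·H(y) - (1 - xy)·log 2`, the Donoho–Tanner exponent. -/
noncomputable def Gfun (x y : ℝ) : ℝ :=
  binEnt x + x * binEnt y - (1 - x * y) * Real.log 2

/-- `Δ_C(d) = C(N,k) · (1 - Q_{d,k}(N))`, which equals `C(N,k) - E f_k(C_N)` for the
Cover–Efron random cone `C_N`. -/
noncomputable def DeltaC (k N : ℕ → ℕ) (d : ℕ) : ℝ :=
  ((N d).choose (k d) : ℝ) * (1 - Q d (k d) (N d))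

lemma sum_choose_split (K m' d : ℕ) :
    ∑ m ∈ range d, (K + m').choose m
      = ∑ j ∈ range (K+1), K.choose j * ∑ i ∈ range (d - j), m'.choose i := by
  induction d with
  | zero => simp
  | succ d ih =>
    have hvdm : (K + m').choose d
        = ∑ j ∈ range (K+1), K.choose j * (if j ≤ d then m'.choose (d - j) else 0) := by
      rw [Nat.add_choose_eq, Finset.Nat.sum_antidiagonal_eq_sum_range_succ_mk]
      have hL : ∑ j ∈ range (d+1), K.choose j * m'.choose (d - j)
          = ∑ j ∈ range (K+d+2), (if j ≤ d then K.choose j * m'.choose (d - j) else 0) := by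
        have e1 : ∑ j ∈ range (d+1), K.choose j * m'.choose (d - j)
            = ∑ j ∈ range (d+1), (if j ≤ d then K.choose j * m'.choose (d - j) else 0) := by
          apply Finset.sum_congr rfl
          intro j hj
          simp only [Finset.mem_range] at hj
          rw [if_pos (by omega : j ≤ d)]
        rw [e1]
        apply Finset.sum_subset (Finset.range_subset_range.2 (by omega))
        intro j _ hj
        simp only [Finset.mem_range] at hj
        exact if_neg (by omega)
      have hR : ∑ j ∈ range (K+1), K.choose j * (if j ≤ d then m'.choose (d - j) else 0)
          = ∑ j ∈ range (K+d+2), (if j ≤ d then K.choose j * m'.choose (d - j) else 0) := by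
        have e1 : ∑ j ∈ range (K+1), K.choose j * (if j ≤ d then m'.choose (d - j) else 0)
            = ∑ j ∈ range (K+1), (if j ≤ d then K.choose j * m'.choose (d - j) else 0) := by
          apply Finset.sum_congr rfl
          intro j _
          rw [mul_ite, mul_zero]
        rw [e1]
        apply Finset.sum_subset (Finset.range_subset_range.2 (by omega))
        intro j hjm hj
        simp only [Finset.mem_range] at hj hjm
        have h0 : K.choose j = 0 := Nat.choose_eq_zero_of_lt (by omega)
        simp [h0]
      rw [hL, hR]
    rw [Finset.sum_range_succ, ih, hvdm, ← Finset.sum_add_distrib]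
    apply Finset.sum_congr rfl
    intro j hj
    rw [← Nat.mul_add]
    congr 1
    by_cases h : j ≤ d
    · rw [if_pos h]
      have h2 : d + 1 - j = (d - j) + 1 := by omega
      rw [h2, Finset.sum_range_succ]
    · rw [if_neg h]
      have h2 : d + 1 - j = d - j := by omega
      rw [h2, Nat.add_zero]

lemma key_lower (K d n : ℕ) (hK : K < d) (hd : d < n) :
    2^K * (∑ i ∈ range (d-K), (n-K-1).choose i) + (2^K - 1) * (n-K-1).choose (d-K)
      ≤ ∑ i ∈ range d, (n-1).choose i := by
  have hsplit := sum_choose_split K (n-K-1) d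
  have hnk : K + (n-K-1) = n - 1 := by omega
  rw [hnk] at hsplit
  rw [hsplit]
  have hstep : ∀ j ∈ range (K+1),
      K.choose j * ((∑ i ∈ range (d-K), (n-K-1).choose i)
        + (if j < K then (n-K-1).choose (d-K) else 0))
      ≤ K.choose j * ∑ i ∈ range (d - j), (n-K-1).choose i := by
    intro j hj
    simp only [Finset.mem_range] at hj
    apply Nat.mul_le_mul_left
    by_cases h : j < K
    · rw [if_pos h]
      have hsub : d - K + 1 ≤ d - j := by omega
      calc ∑ i ∈ range (d-K), (n-K-1).choose i + (n-K-1).choose (d-K)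
          = ∑ i ∈ range (d-K+1), (n-K-1).choose i := (Finset.sum_range_succ _ _).symm
        _ ≤ ∑ i ∈ range (d - j), (n-K-1).choose i := by
            apply Finset.sum_le_sum_of_subset
            exact Finset.range_subset_range.2 hsub
    · rw [if_neg h, Nat.add_zero]
      apply Finset.sum_le_sum_of_subset
      exact Finset.range_subset_range.2 (by omega)
  calc 2^K * (∑ i ∈ range (d-K), (n-K-1).choose i) + (2^K - 1) * (n-K-1).choose (d-K)
      = ∑ j ∈ range (K+1), K.choose j * ((∑ i ∈ range (d-K), (n-K-1).choose i)
          + (if j < K then (n-K-1).choose (d-K) else 0)) := by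
        rw [Finset.sum_congr rfl (fun j hj => Nat.mul_add _ _ _), Finset.sum_add_distrib,
          ← Finset.sum_mul, Nat.sum_range_choose]
        congr 1
        rw [Finset.sum_range_succ, if_neg (lt_irrefl K), Nat.mul_zero, Nat.add_zero]
        have : ∀ j ∈ range K, K.choose j * (if j < K then (n-K-1).choose (d-K) else 0)
            = K.choose j * (n-K-1).choose (d-K) := by
          intro j hj; simp only [Finset.mem_range] at hj; rw [if_pos hj]
        rw [Finset.sum_congr rfl this, ← Finset.sum_mul]
        congr 1
        have := Nat.sum_range_choose K
        rw [Finset.sum_range_succ, Nat.choose_self] at this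
        omega
    _ ≤ _ := Finset.sum_le_sum hstep

lemma key_upper (K d n : ℕ) (hK : K < d) (hd : d < n) :
    ∑ i ∈ range d, (n-1).choose i
      ≤ 2^K * (∑ i ∈ range (d-K), (n-K-1).choose i)
        + 2^K * ∑ i ∈ Finset.Ico (d-K) d, (n-K-1).choose i := by
  have hsplit := sum_choose_split K (n-K-1) d
  have hnk : K + (n-K-1) = n - 1 := by omega
  rw [hnk] at hsplit
  rw [hsplit]
  calc ∑ j ∈ range (K+1), K.choose j * ∑ i ∈ range (d - j), (n-K-1).choose i
      ≤ ∑ j ∈ range (K+1), K.choose j * ∑ i ∈ range d, (n-K-1).choose i := by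
        apply Finset.sum_le_sum
        intro j _
        exact Nat.mul_le_mul_left _ (Finset.sum_le_sum_of_subset
          (Finset.range_subset_range.2 (Nat.sub_le d j)))
    _ = 2^K * ∑ i ∈ range d, (n-K-1).choose i := by
        rw [← Finset.sum_mul, Nat.sum_range_choose]
    _ = _ := by
        rw [← Finset.sum_range_add_sum_Ico _ (Nat.sub_le d K), Nat.mul_add]

lemma half_sum (n d : ℕ) (hd : d ≤ n) (h2 : n ≤ 2 * d) (hn : 1 ≤ n) :
    2 ^ (n-1) ≤ 2 * ∑ i ∈ range d, (n-1).choose i := by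
  have hfull : ∑ i ∈ range n, (n-1).choose i = 2^(n-1) := by
    have := Nat.sum_range_choose (n-1)
    rwa [Nat.sub_add_cancel hn] at this
  have hsplit : ∑ i ∈ range d, (n-1).choose i + ∑ i ∈ Finset.Ico d n, (n-1).choose i
      = 2^(n-1) := by
    rw [Finset.sum_range_add_sum_Ico _ hd, hfull]
  have hrefl : ∑ i ∈ Finset.Ico d n, (n-1).choose i ≤ ∑ i ∈ range d, (n-1).choose i := by
    have he : ∑ i ∈ Finset.Ico d n, (n-1).choose i
        = ∑ i ∈ Finset.range (n-d), (n-1).choose i := by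
      apply Finset.sum_nbij' (fun i => n - 1 - i) (fun i => n - 1 - i)
      · intro i hi; simp only [Finset.mem_Ico, Finset.mem_range] at *; omega
      · intro i hi; simp only [Finset.mem_Ico, Finset.mem_range] at *; omega
      · intro i hi; simp only [Finset.mem_Ico] at hi; omega
      · intro i hi; simp only [Finset.mem_range] at hi; omega
      · intro i hi
        simp only [Finset.mem_Ico] at hi
        exact (Nat.choose_symm (by omega)).symm
    rw [he]
    exact Finset.sum_le_sum_of_subset (Finset.range_subset_range.2 (by omega))
  omega

lemma choose_ident (K d n : ℕ) (hK : K < d) (hd : d < n) :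
    (n - K) * (n.choose K * (n-K-1).choose (d-K)) = (n - d) * (n.choose d * d.choose K) := by
  have h1 : n.choose d * d.choose K = n.choose K * (n - K).choose (d - K) :=
    Nat.choose_mul (n := n) (le_of_lt hK)
  have h2 : (n-K-1).choose (d-K) * (n - K) = (n - K).choose (d-K) * (n - K - (d-K)) := by
    have := Nat.choose_mul_succ_eq (n-K-1) (d-K)
    have e1 : n - K - 1 + 1 = n - K := by omega
    rw [e1] at this
    rw [this]
  have e2 : n - K - (d - K) = n - d := by omega
  rw [h1]
  calc (n - K) * (n.choose K * (n-K-1).choose (d-K))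
      = n.choose K * ((n-K-1).choose (d-K) * (n - K)) := by ring
    _ = n.choose K * ((n - K).choose (d-K) * (n - d)) := by rw [h2, e2]
    _ = (n - d) * (n.choose K * (n - K).choose (d-K)) := by ring

lemma geom_tail (m t u : ℕ) (r : ℝ) (hr0 : 0 ≤ r) (hr1 : r < 1)
    (h : ∀ i, t ≤ i → ((m - i : ℕ) : ℝ) ≤ r * ((i:ℝ)+1)) :
    ∑ i ∈ Finset.Ico t u, ((m.choose i : ℕ):ℝ) ≤ (m.choose t : ℝ) / (1 - r) := by
  have hstep : ∀ i, t ≤ i → ((m.choose (i+1) : ℕ):ℝ) ≤ r * (m.choose i : ℝ) := by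
    intro i hi
    have hc := Nat.choose_succ_right_eq m i
    have hcR : ((m.choose (i+1) : ℕ):ℝ) * ((i:ℝ)+1) = (m.choose i : ℝ) * ((m - i : ℕ):ℝ) := by
      exact_mod_cast congrArg (fun x : ℕ => (x:ℝ)) hc
    have hipos : (0:ℝ) < (i:ℝ)+1 := by positivity
    rw [← mul_le_mul_iff_of_pos_right hipos, hcR]
    calc (m.choose i : ℝ) * ((m - i : ℕ):ℝ) ≤ (m.choose i : ℝ) * (r * ((i:ℝ)+1)) := by
          apply mul_le_mul_of_nonneg_left (h i hi) (by positivity)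
      _ = r * (m.choose i : ℝ) * ((i:ℝ)+1) := by ring
  have hpow : ∀ s : ℕ, ((m.choose (t+s) : ℕ):ℝ) ≤ r^s * (m.choose t : ℝ) := by
    intro s
    induction s with
    | zero => simp
    | succ s ih =>
      have := hstep (t+s) (Nat.le_add_right t s)
      calc ((m.choose (t+(s+1)) : ℕ):ℝ) = ((m.choose ((t+s)+1) : ℕ):ℝ) := by ring_nf
        _ ≤ r * (m.choose (t+s) : ℝ) := this
        _ ≤ r * (r^s * (m.choose t : ℝ)) := by
            apply mul_le_mul_of_nonneg_left ih hr0
        _ = r^(s+1) * (m.choose t : ℝ) := by ring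
  rw [Finset.sum_Ico_eq_sum_range]
  calc ∑ s ∈ range (u - t), ((m.choose (t+s) : ℕ):ℝ)
      ≤ ∑ s ∈ range (u - t), r^s * (m.choose t : ℝ) := Finset.sum_le_sum (fun s _ => hpow s)
    _ = (∑ s ∈ range (u - t), r^s) * (m.choose t : ℝ) := by rw [Finset.sum_mul]
    _ ≤ (1/(1-r)) * (m.choose t : ℝ) := by
        apply mul_le_mul_of_nonneg_right _ (by positivity)
        have hne : r ≠ 1 := by linarith
        have hgeom : ∑ s ∈ range (u - t), r^s = (1 - r^(u-t))/(1-r) := by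
          rw [geom_sum_eq hne]
          rw [div_eq_div_iff (by intro hc; apply hne; linarith) (by intro hc; apply hne; linarith)]
          ring
        rw [hgeom]
        gcongr
        · have : (0:ℝ) ≤ r^(u-t) := by positivity
          linarith
    _ = (m.choose t : ℝ) / (1 - r) := by ring

lemma stirlingSeq_pos' {a : ℕ} (ha : 1 ≤ a) : 0 < Stirling.stirlingSeq a := by
  rw [Stirling.stirlingSeq]
  have h1 : (0:ℝ) < (a.factorial : ℝ) := by exact_mod_cast Nat.factorial_pos a
  have hapos : (0:ℝ) < (a:ℝ) := by exact_mod_cast ha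
  positivity

lemma factorial_eq_stirling {a : ℕ} (ha : 1 ≤ a) :
    (a.factorial : ℝ) = Stirling.stirlingSeq a * (Real.sqrt (2*a) * ((a:ℝ)/Real.exp 1)^a) := by
  rw [Stirling.stirlingSeq]
  have hapos : (0:ℝ) < (a:ℝ) := by exact_mod_cast ha
  have h2 : (0:ℝ) < Real.sqrt (2*a) := Real.sqrt_pos.2 (by positivity)
  have h3 : (0:ℝ) < ((a:ℝ)/Real.exp 1)^a := by positivity
  field_simp

lemma choose_stirling_eq {n m : ℕ} (h0 : 0 < m) (h1 : m < n) :
    (n.choose m : ℝ) = (Stirling.stirlingSeq n / (Stirling.stirlingSeq m * Stirling.stirlingSeq (n-m))) *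
      (Real.sqrt (2*n) / (Real.sqrt (2*m) * Real.sqrt (2*((n:ℝ)-m)))) *
      ((n:ℝ)^n / ((m:ℝ)^m * ((n:ℝ)-m)^(n-m))) := by
  have hmn : m ≤ n := le_of_lt h1
  have hnm1 : 1 ≤ n - m := by omega
  have hcast : ((n - m : ℕ) : ℝ) = (n:ℝ) - m := Nat.cast_sub hmn
  have hfac : (n.choose m : ℝ) * (m.factorial : ℝ) * ((n-m).factorial : ℝ) = (n.factorial : ℝ) := by
    exact_mod_cast congrArg (fun x : ℕ => (x:ℝ)) (Nat.choose_mul_factorial_mul_factorial hmn)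
  have hn := factorial_eq_stirling (by omega : 1 ≤ n)
  have hm := factorial_eq_stirling h0
  have hnm := factorial_eq_stirling hnm1
  have hsn := stirlingSeq_pos' (by omega : 1 ≤ n)
  have hsm := stirlingSeq_pos' h0
  have hsnm := stirlingSeq_pos' hnm1
  have hnpos : (0:ℝ) < (n:ℝ) := by exact_mod_cast Nat.pos_of_ne_zero (by omega)
  have hmpos : (0:ℝ) < (m:ℝ) := by exact_mod_cast h0
  have hnmpos : (0:ℝ) < ((n-m:ℕ):ℝ) := by exact_mod_cast hnm1
  have hnmpos' : (0:ℝ) < (n:ℝ) - m := by rw [← hcast]; exact hnmpos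
  have hs2n : (0:ℝ) < Real.sqrt (2*n) := Real.sqrt_pos.2 (by positivity)
  have hs2m : (0:ℝ) < Real.sqrt (2*m) := Real.sqrt_pos.2 (by positivity)
  have hs2nm : (0:ℝ) < Real.sqrt (2*((n:ℝ)-m)) := Real.sqrt_pos.2 (by positivity)
  have hexp : (0:ℝ) < Real.exp 1 := Real.exp_pos 1
  have hepow : (Real.exp 1)^m * (Real.exp 1)^(n-m) = (Real.exp 1)^n := by
    rw [← pow_add]
    congr 1
    omega
  have hppow : ((m:ℝ))^m * (((n:ℝ)-m))^(n-m) ≠ 0 := by positivity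
  -- solve from hfac
  rw [hn, hm, hnm, hcast] at hfac
  have hchoose : (n.choose m : ℝ)
      = (Stirling.stirlingSeq n * (Real.sqrt (2*n) * ((n:ℝ)/Real.exp 1)^n))
        / ((Stirling.stirlingSeq m * (Real.sqrt (2*m) * ((m:ℝ)/Real.exp 1)^m))
          * (Stirling.stirlingSeq (n-m) * (Real.sqrt (2*((n:ℝ)-m)) * (((n:ℝ)-m)/Real.exp 1)^(n-m)))) := by
    rw [← hfac]
    field_simp
  rw [hchoose]
  rw [div_pow, div_pow, div_pow, ← hepow]
  field_simp


lemma exp_nbinEnt {n m : ℕ} (h0 : 0 < m) (h1 : m < n) :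
    Real.exp ((n:ℝ) * binEnt ((m:ℝ)/(n:ℝ)))
      = (n:ℝ)^n / ((m:ℝ)^m * ((n:ℝ)-(m:ℝ))^(n-m)) := by
  have hb : (0:ℝ) < (n:ℝ) := by exact_mod_cast Nat.pos_of_ne_zero (by omega)
  have ha : (0:ℝ) < (m:ℝ) := by exact_mod_cast h0
  have hc : (0:ℝ) < (n:ℝ)-(m:ℝ) := by
    have : (m:ℝ) < (n:ℝ) := by exact_mod_cast h1
    linarith
  have hcastnm : ((n-m:ℕ):ℝ) = (n:ℝ)-(m:ℝ) := Nat.cast_sub (le_of_lt h1)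
  have key : (n:ℝ) * binEnt ((m:ℝ)/(n:ℝ))
      = (n:ℝ)*Real.log n - ((m:ℝ)*Real.log m + ((n:ℝ)-(m:ℝ))*Real.log ((n:ℝ)-m)) := by
    rw [binEnt]
    have h1ab : 1 - (m:ℝ)/(n:ℝ) = ((n:ℝ)-m)/n := by field_simp
    rw [h1ab, Real.log_div (by positivity) (by positivity),
      Real.log_div (by positivity) (by positivity)]
    field_simp
    ring
  rw [key, Real.exp_sub, Real.exp_add]
  have e1 : Real.exp ((n:ℝ)*Real.log n) = (n:ℝ)^n := by
    rw [Real.exp_nat_mul, Real.exp_log hb]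
  have e2 : Real.exp ((m:ℝ)*Real.log m) = (m:ℝ)^m := by
    rw [Real.exp_nat_mul, Real.exp_log ha]
  have e3 : Real.exp (((n:ℝ)-(m:ℝ))*Real.log ((n:ℝ)-m)) = ((n:ℝ)-(m:ℝ))^(n-m) := by
    rw [← hcastnm, Real.exp_nat_mul, Real.exp_log (by rw [hcastnm]; exact hc), hcastnm]
  rw [e1, e2, e3]

set_option maxHeartbeats 1000000 in
lemma choose_P_bounds {n m : ℕ} {β : ℝ} (hβ : 0 < β) (h0 : 0 < m) (h1 : m < n)
    (hm : β*(n:ℝ) ≤ m) (hm' : β*(n:ℝ) ≤ (n:ℝ)-m)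
    (hsn : 1 ≤ Stirling.stirlingSeq n ∧ Stirling.stirlingSeq n ≤ 3)
    (hsm : 1 ≤ Stirling.stirlingSeq m ∧ Stirling.stirlingSeq m ≤ 3)
    (hsd : 1 ≤ Stirling.stirlingSeq (n-m) ∧ Stirling.stirlingSeq (n-m) ≤ 3) :
    (1/9)/Real.sqrt n ≤ (Real.exp ((n:ℝ) * binEnt ((m:ℝ)/(n:ℝ))))⁻¹ * n.choose m ∧
    (Real.exp ((n:ℝ) * binEnt ((m:ℝ)/(n:ℝ))))⁻¹ * n.choose m ≤ (3/β)/Real.sqrt n := by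
  have hb : (0:ℝ) < (n:ℝ) := by exact_mod_cast Nat.pos_of_ne_zero (by omega)
  have ha : (0:ℝ) < (m:ℝ) := by exact_mod_cast h0
  have hc : (0:ℝ) < (n:ℝ)-(m:ℝ) := by
    have : (m:ℝ) < (n:ℝ) := by exact_mod_cast h1
    linarith
  have hEnt : (0:ℝ) < (n:ℝ)^n / ((m:ℝ)^m * ((n:ℝ)-(m:ℝ))^(n-m)) := by positivity
  have hEeq := exp_nbinEnt h0 h1
  have hched := choose_stirling_eq h0 h1
  set sr := Stirling.stirlingSeq n / (Stirling.stirlingSeq m * Stirling.stirlingSeq (n-m)) with hsr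
  set W := Real.sqrt (2*n) / (Real.sqrt (2*m) * Real.sqrt (2*((n:ℝ)-m))) with hW
  have hmain : (Real.exp ((n:ℝ) * binEnt ((m:ℝ)/(n:ℝ))))⁻¹ * n.choose m = sr * W := by
    rw [hEeq, hched]
    field_simp
  -- bounds on sr
  have hsmp := stirlingSeq_pos' (show 1 ≤ m from h0)
  have hsnmp := stirlingSeq_pos' (show 1 ≤ n-m by omega)
  have hsrlb : (1:ℝ)/9 ≤ sr := by
    rw [hsr, le_div_iff₀ (mul_pos hsmp hsnmp)]
    nlinarith [hsn.1, hsm.2, hsd.2, hsmp, hsnmp]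
  have hsrub : sr ≤ 3 := by
    rw [hsr, div_le_iff₀ (mul_pos hsmp hsnmp)]
    nlinarith [hsn.2, hsm.1, hsd.1, hsmp, hsnmp]
  -- sqrt facts
  have hprod : Real.sqrt (2*m) * Real.sqrt (2*((n:ℝ)-m)) = 2 * Real.sqrt ((m:ℝ)*((n:ℝ)-m)) := by
    rw [← Real.sqrt_mul (by positivity)]
    rw [show (2*(m:ℝ))*(2*((n:ℝ)-m)) = 4*((m:ℝ)*((n:ℝ)-m)) by ring]
    rw [show (4:ℝ) = 2^2 by norm_num, Real.sqrt_mul (by positivity), Real.sqrt_sq (by norm_num)]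
  have hsqmcpos : (0:ℝ) < Real.sqrt ((m:ℝ)*((n:ℝ)-m)) := Real.sqrt_pos.2 (by positivity)
  have hsqn : (0:ℝ) < Real.sqrt n := Real.sqrt_pos.2 hb
  have hmc_ub : 2 * Real.sqrt ((m:ℝ)*((n:ℝ)-m)) ≤ (n:ℝ) := by
    have h1' : (m:ℝ)*((n:ℝ)-m) ≤ ((n:ℝ)/2)^2 := by nlinarith [sq_nonneg ((n:ℝ) - 2*m)]
    have := Real.sqrt_le_sqrt h1'
    rw [Real.sqrt_sq (by positivity)] at this
    linarith
  have hmc_lb : β * (n:ℝ) ≤ Real.sqrt ((m:ℝ)*((n:ℝ)-m)) := by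
    have h1' : (β*(n:ℝ))^2 ≤ (m:ℝ)*((n:ℝ)-m) := by
      have := mul_le_mul hm hm' (by positivity) (le_of_lt ha)
      nlinarith
    have := Real.sqrt_le_sqrt h1'
    rwa [Real.sqrt_sq (by positivity)] at this
  have hWlb : 1/Real.sqrt n ≤ W := by
    rw [hW, hprod, div_le_div_iff₀ hsqn (by positivity), one_mul]
    calc 2 * Real.sqrt ((m:ℝ)*((n:ℝ)-m)) ≤ (n:ℝ) := hmc_ub
      _ = Real.sqrt n * Real.sqrt n := (Real.mul_self_sqrt (le_of_lt hb)).symm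
      _ ≤ Real.sqrt (2*n) * Real.sqrt n := by
          apply mul_le_mul_of_nonneg_right _ (le_of_lt hsqn)
          exact Real.sqrt_le_sqrt (by linarith)
  have hWub : W ≤ (1/β)/Real.sqrt n := by
    rw [hW, hprod, div_le_div_iff₀ (by positivity) hsqn]
    have e4 : Real.sqrt (2*n) * Real.sqrt n = Real.sqrt 2 * (n:ℝ) := by
      rw [← Real.sqrt_mul (by positivity), show (2*(n:ℝ))*n = 2*(n:ℝ)^2 by ring,
        Real.sqrt_mul (by norm_num), Real.sqrt_sq (le_of_lt hb)]
    rw [e4]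
    have hsqrt2 : Real.sqrt 2 ≤ 2 := by
      nlinarith [Real.sq_sqrt (by norm_num : (0:ℝ) ≤ 2), Real.sqrt_nonneg 2]
    calc Real.sqrt 2 * (n:ℝ) ≤ 2 * (n:ℝ) := by
          apply mul_le_mul_of_nonneg_right hsqrt2 (le_of_lt hb)
      _ = (1/β) * (2 * (β * (n:ℝ))) := by
          field_simp
      _ ≤ (1/β) * (2 * Real.sqrt ((m:ℝ)*((n:ℝ)-m))) := by
          apply mul_le_mul_of_nonneg_left _ (by positivity)
          linarith
  have hWpos : 0 < W := lt_of_lt_of_le (by positivity) hWlb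
  rw [hmain]
  constructor
  · calc (1:ℝ)/9/Real.sqrt n = (1/9) * (1/Real.sqrt n) := by ring
      _ ≤ sr * W := by
          apply mul_le_mul hsrlb hWlb (by positivity) (by linarith)
  · calc sr * W ≤ 3 * ((1/β)/Real.sqrt n) := by
          apply mul_le_mul hsrub hWub (le_of_lt hWpos) (by norm_num)
      _ = (3/β)/Real.sqrt n := by ring



set_option maxHeartbeats 2000000 in
lemma main_bound (K d n n0 : ℕ) (β1 β2 r : ℝ)
    (hst : ∀ a, n0 ≤ a → 1 ≤ Stirling.stirlingSeq a ∧ Stirling.stirlingSeq a ≤ 3)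
    (hβ1 : 0 < β1) (hβ2 : 0 < β2) (hr0 : 0 < r) (hr1 : r < 1)
    (hK : K < d) (hd : d < n) (hK1 : 1 ≤ K)
    (hn2d : (n:ℝ) ≤ 2*(d:ℝ))
    (hb1 : β1*(n:ℝ) ≤ (d:ℝ)) (hb1' : β1*(n:ℝ) ≤ (n:ℝ)-(d:ℝ))
    (hb2 : β2*(d:ℝ) ≤ (K:ℝ)) (hb2' : β2*(d:ℝ) ≤ (d:ℝ)-(K:ℝ))
    (hrat : ((n:ℝ)-(d:ℝ)) ≤ r * ((d:ℝ)-(K:ℝ)))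
    (hn0K : n0 ≤ K) (hn0dK : n0 ≤ d-K) (hn0nd : n0 ≤ n-d) :
    β1/81 ≤ (n:ℝ) * Real.exp (-(n:ℝ) * Gfun ((d:ℝ)/(n:ℝ)) ((K:ℝ)/(d:ℝ)))
        * ((n.choose K : ℝ) * (1 - Q d K n)) ∧
    (n:ℝ) * Real.exp (-(n:ℝ) * Gfun ((d:ℝ)/(n:ℝ)) ((K:ℝ)/(d:ℝ)))
        * ((n.choose K : ℝ) * (1 - Q d K n)) ≤ 72/(β1*β2*(1-r)) := by
  have hdpos : 0 < d := by omega
  have hnpos : 0 < n := by omega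
  have hdR : (0:ℝ) < (d:ℝ) := by exact_mod_cast hdpos
  have hnR : (0:ℝ) < (n:ℝ) := by exact_mod_cast hnpos
  have hKdR : ((K:ℝ)) < (d:ℝ) := by exact_mod_cast hK
  have hdnR : ((d:ℝ)) < (n:ℝ) := by exact_mod_cast hd
  -- sums
  set A : ℝ := ∑ i ∈ Finset.range (d - K), ((n - K - 1).choose i : ℝ) with hA
  set Bs : ℝ := ∑ i ∈ Finset.range d, ((n - 1).choose i : ℝ) with hBs
  set M : ℝ := ((n - K - 1).choose (d - K) : ℝ) with hM
  have hMpos : (0:ℝ) < M := by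
    rw [hM]
    exact_mod_cast Nat.choose_pos (by omega : d - K ≤ n - K - 1)
  have hApos : (0:ℝ) ≤ A := by
    rw [hA]; positivity
  have hBspos : (0:ℝ) < Bs := by
    rw [hBs]
    apply Finset.sum_pos (fun i hi => ?_) ⟨0, Finset.mem_range.2 hdpos⟩
    have hi' : i ≤ n - 1 := by simp only [Finset.mem_range] at hi; omega
    exact_mod_cast Nat.choose_pos hi' 
  -- B bounds
  have hBsub : Bs ≤ 2^(n-1) := by
    rw [hBs]
    have h1 : ∑ i ∈ Finset.range d, (n - 1).choose i ≤ 2^(n-1) := by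
      calc ∑ i ∈ Finset.range d, (n - 1).choose i
          ≤ ∑ i ∈ Finset.range ((n-1)+1), (n - 1).choose i :=
            Finset.sum_le_sum_of_subset (Finset.range_subset_range.2 (by omega))
        _ = 2^(n-1) := Nat.sum_range_choose (n-1)
    calc (∑ i ∈ Finset.range d, ((n - 1).choose i : ℝ))
        = ((∑ i ∈ Finset.range d, (n - 1).choose i : ℕ) : ℝ) := by push_cast; rfl
      _ ≤ ((2^(n-1) : ℕ) : ℝ) := by exact_mod_cast h1
      _ = 2^(n-1) := by push_cast; rfl
  have hBslb : (2:ℝ)^(n-1) ≤ 2 * Bs := by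
    have h1 := half_sum n d (le_of_lt hd) (by exact_mod_cast hn2d) (by omega)
    rw [hBs]
    calc (2:ℝ)^(n-1) = ((2^(n-1) : ℕ) : ℝ) := by push_cast; rfl
      _ ≤ ((2 * ∑ i ∈ Finset.range d, (n - 1).choose i : ℕ) : ℝ) := by exact_mod_cast h1
      _ = 2 * ∑ i ∈ Finset.range d, ((n - 1).choose i : ℝ) := by push_cast; rfl
  -- S bounds
  set S : ℝ := Bs - 2^K * A with hS
  have hSlb : ((2:ℝ)^K - 1) * M ≤ S := by
    have h1 := key_lower K d n hK hd
    rw [hS, hBs, hA, hM]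
    have h2 : ((2^K * (∑ i ∈ range (d-K), (n-K-1).choose i) + (2^K - 1) * (n-K-1).choose (d-K) : ℕ) : ℝ)
        ≤ ∑ i ∈ Finset.range d, ((n - 1).choose i : ℝ) := by
      rw [show (∑ i ∈ Finset.range d, ((n - 1).choose i : ℝ)) = ((∑ i ∈ range d, (n-1).choose i : ℕ):ℝ) by push_cast; rfl]
      exact_mod_cast h1
    have h3 : ((2^K - 1 : ℕ) : ℝ) = (2:ℝ)^K - 1 := by
      have : (1:ℕ) ≤ 2^K := Nat.one_le_two_pow
      push_cast [this]
      ring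
    push_cast [h3] at h2
    linarith
  have htail : ∑ i ∈ Finset.Ico (d-K) d, (((n-K-1).choose i : ℕ):ℝ) ≤ M / (1-r) := by
    apply geom_tail (n-K-1) (d-K) d r (le_of_lt hr0) hr1
    intro i hi
    have h1 : ((n-K-1-i : ℕ):ℝ) ≤ ((n-d : ℕ):ℝ) := by
      exact_mod_cast Nat.cast_le.2 (by omega : n-K-1-i ≤ n-d)
    have h2 : ((n-d : ℕ):ℝ) = (n:ℝ)-(d:ℝ) := by
      push_cast [Nat.cast_sub (le_of_lt hd)]; ring
    have h3 : ((d:ℝ)-(K:ℝ)) ≤ (i:ℝ)+1 := by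
      have : ((d-K : ℕ):ℝ) ≤ (i:ℝ) := by exact_mod_cast Nat.cast_le.2 hi
      have h4 : ((d-K : ℕ):ℝ) = (d:ℝ)-(K:ℝ) := by
        push_cast [Nat.cast_sub (le_of_lt hK)]; ring
      linarith
    calc ((n-K-1-i : ℕ):ℝ) ≤ (n:ℝ)-(d:ℝ) := by rw [← h2]; exact h1
      _ ≤ r * ((d:ℝ)-(K:ℝ)) := hrat
      _ ≤ r * ((i:ℝ)+1) := mul_le_mul_of_nonneg_left h3 (le_of_lt hr0)
  have hSub : S ≤ 2^K * (M / (1-r)) := by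
    have h1 := key_upper K d n hK hd
    have h2 : Bs ≤ 2^K * A + 2^K * ∑ i ∈ Finset.Ico (d-K) d, (((n-K-1).choose i : ℕ):ℝ) := by
      rw [hBs, hA]
      have := (Nat.cast_le (α := ℝ)).2 h1
      push_cast at this ⊢
      convert this using 2 <;> push_cast <;> ring
    have h3 : (0:ℝ) ≤ (2:ℝ)^K := by positivity
    rw [hS]
    have := mul_le_mul_of_nonneg_left htail h3
    linarith
  -- choose identity
  have hnKpos : (0:ℝ) < (n:ℝ)-(K:ℝ) := by linarith
  have hndpos : (0:ℝ) < (n:ℝ)-(d:ℝ) := by linarith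
  have hdKpos : (0:ℝ) < (d:ℝ)-(K:ℝ) := by linarith
  have hid : ((n:ℝ)-(K:ℝ)) * ((n.choose K : ℝ) * M)
      = ((n:ℝ)-(d:ℝ)) * ((n.choose d : ℝ) * (d.choose K : ℝ)) := by
    have h1 := choose_ident K d n hK hd
    have h2 := congrArg (fun x : ℕ => (x:ℝ)) h1
    simp only [Nat.cast_mul, Nat.cast_sub (show K ≤ n by omega),
      Nat.cast_sub (show d ≤ n by omega)] at h2
    rw [hM]
    exact h2
  have hCnK : (n.choose K : ℝ)
      = ((n:ℝ)-(d:ℝ)) * ((n.choose d : ℝ) * (d.choose K : ℝ)) / (((n:ℝ)-(K:ℝ)) * M) := by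
    rw [eq_div_iff (by positivity)]
    linear_combination hid
  -- Q rewrite
  have hQrw : 1 - Q d K n = S / Bs := by
    rw [Q, hS, ← hA, ← hBs]
    field_simp
  -- exp rewrite
  have hexp : Real.exp (-(n:ℝ) * Gfun ((d:ℝ)/(n:ℝ)) ((K:ℝ)/(d:ℝ)))
      = (Real.exp ((n:ℝ) * binEnt ((d:ℝ)/(n:ℝ))))⁻¹
        * (Real.exp ((d:ℝ) * binEnt ((K:ℝ)/(d:ℝ))))⁻¹ * 2^(n-K) := by
    have e1 : -(n:ℝ) * Gfun ((d:ℝ)/(n:ℝ)) ((K:ℝ)/(d:ℝ))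
        = -((n:ℝ) * binEnt ((d:ℝ)/(n:ℝ))) + -((d:ℝ) * binEnt ((K:ℝ)/(d:ℝ)))
          + ((n:ℝ)-(K:ℝ)) * Real.log 2 := by
      rw [Gfun]
      field_simp
      ring
    rw [e1, Real.exp_add, Real.exp_add, Real.exp_neg, Real.exp_neg]
    congr 1
    have e2 : ((n:ℝ)-(K:ℝ)) = ((n-K : ℕ):ℝ) := by
      push_cast [Nat.cast_sub (show K ≤ n by omega)]; ring
    rw [e2, Real.exp_nat_mul, Real.exp_log (by norm_num : (0:ℝ) < 2)]
  -- P bounds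
  have hP1 := choose_P_bounds hβ1 hdpos hd hb1 hb1' (hst n (by omega)) (hst d (by omega))
    (hst (n-d) hn0nd)
  have hP2 := choose_P_bounds hβ2 (by omega : 0 < K) hK hb2 hb2' (hst d (by omega))
    (hst K hn0K) (hst (d-K) hn0dK)
  set P1 := (Real.exp ((n:ℝ) * binEnt ((d:ℝ)/(n:ℝ))))⁻¹ * (n.choose d : ℝ) with hP1def
  set P2 := (Real.exp ((d:ℝ) * binEnt ((K:ℝ)/(d:ℝ))))⁻¹ * (d.choose K : ℝ) with hP2def
  have hsqn : (0:ℝ) < Real.sqrt n := Real.sqrt_pos.2 hnR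
  have hsqd : (0:ℝ) < Real.sqrt d := Real.sqrt_pos.2 hdR
  have hP1pos : 0 < P1 := lt_of_lt_of_le (by positivity) hP1.1
  have hP2pos : 0 < P2 := lt_of_lt_of_le (by positivity) hP2.1
  have hE1 : Real.exp ((n:ℝ) * binEnt ((d:ℝ)/(n:ℝ))) ≠ 0 := Real.exp_ne_zero _
  have hE2 : Real.exp ((d:ℝ) * binEnt ((K:ℝ)/(d:ℝ))) ≠ 0 := Real.exp_ne_zero _
  have hVeq : (n:ℝ) * Real.exp (-(n:ℝ) * Gfun ((d:ℝ)/(n:ℝ)) ((K:ℝ)/(d:ℝ)))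
        * ((n.choose K : ℝ) * (1 - Q d K n))
      = P1 * P2 * ((n:ℝ) * (((n:ℝ)-(d:ℝ))/((n:ℝ)-(K:ℝ))) * ((2:ℝ)^(n-K) * S / (M * Bs))) := by
    rw [hexp, hQrw, hCnK, hP1def, hP2def]
    field_simp
  -- T5 bounds
  have hpow : (2:ℝ)^(n-K) * (2:ℝ)^K = 2^n := by
    rw [← pow_add]
    congr 1
    omega
  have hpow1 : (2:ℝ)^n = 2*2^(n-1) := by
    rw [← pow_succ']
    congr 1
    omega
  have hpow2 : (2:ℝ)^(n-K) ≤ 2^(n-1) := by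
    apply pow_le_pow_right₀ (by norm_num)
    omega
  have hT5lb : (1:ℝ) ≤ (2:ℝ)^(n-K) * S / (M * Bs) := by
    rw [le_div_iff₀ (by positivity), one_mul]
    calc M * Bs ≤ M * 2^(n-1) := mul_le_mul_of_nonneg_left hBsub hMpos.le
      _ ≤ M * (2^n - 2^(n-K)) := by
          apply mul_le_mul_of_nonneg_left _ hMpos.le
          linarith
      _ = 2^(n-K) * (((2:ℝ)^K - 1) * M) := by linear_combination -M * hpow
      _ ≤ 2^(n-K) * S := mul_le_mul_of_nonneg_left hSlb (by positivity)
  have hT5ub : (2:ℝ)^(n-K) * S / (M * Bs) ≤ 4/(1-r) := by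
    rw [div_le_div_iff₀ (by positivity) (by linarith : (0:ℝ) < 1-r)]
    have hS1r : S * (1-r) ≤ 2^K * M := by
      have h6 := mul_le_mul_of_nonneg_right hSub (by linarith : (0:ℝ) ≤ 1-r)
      calc S*(1-r) ≤ 2^K * (M/(1-r)) * (1-r) := h6
        _ = 2^K * M := by
          rw [mul_assoc, div_mul_cancel₀ M (by linarith : (1:ℝ)-r ≠ 0)]
    have h5 : (2:ℝ)^n ≤ 4 * Bs := by linarith
    calc (2:ℝ)^(n-K)*S*(1-r) = 2^(n-K) * (S*(1-r)) := by ring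
      _ ≤ 2^(n-K) * ((2:ℝ)^K * M) := mul_le_mul_of_nonneg_left hS1r (by positivity)
      _ = 2^n * M := by rw [← mul_assoc, hpow]
      _ ≤ (4*Bs) * M := mul_le_mul_of_nonneg_right h5 hMpos.le
      _ = 4*(M*Bs) := by ring
  -- T4 bounds
  have hT4lb : β1 ≤ ((n:ℝ)-(d:ℝ))/((n:ℝ)-(K:ℝ)) := by
    rw [le_div_iff₀ hnKpos]
    calc β1*((n:ℝ)-(K:ℝ)) ≤ β1*(n:ℝ) := by
          apply mul_le_mul_of_nonneg_left _ hβ1.le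
          have : (0:ℝ) ≤ (K:ℝ) := Nat.cast_nonneg K
          linarith
      _ ≤ (n:ℝ)-(d:ℝ) := hb1'
  have hT4ub : ((n:ℝ)-(d:ℝ))/((n:ℝ)-(K:ℝ)) ≤ 1 := by
    rw [div_le_one hnKpos]
    linarith
  -- sqrt quotient facts
  have hmss : Real.sqrt n * Real.sqrt n = (n:ℝ) := Real.mul_self_sqrt hnR.le
  have hsdn : Real.sqrt d ≤ Real.sqrt n := Real.sqrt_le_sqrt (by linarith)
  have hq1 : (1:ℝ) ≤ (n:ℝ)/(Real.sqrt n * Real.sqrt d) := by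
    rw [le_div_iff₀ (by positivity), one_mul]
    calc Real.sqrt n * Real.sqrt d ≤ Real.sqrt n * Real.sqrt n :=
          mul_le_mul_of_nonneg_left hsdn hsqn.le
      _ = (n:ℝ) := hmss
  have hsqrt2 : Real.sqrt 2 ≤ 2 := by
    have h9 : Real.sqrt 2 ≤ Real.sqrt (2^2) := Real.sqrt_le_sqrt (by norm_num)
    rwa [Real.sqrt_sq (by norm_num : (0:ℝ) ≤ 2)] at h9
  have hq2 : (n:ℝ)/(Real.sqrt n * Real.sqrt d) ≤ 2 := by
    rw [div_le_iff₀ (by positivity)]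
    have e3 : Real.sqrt n ≤ Real.sqrt 2 * Real.sqrt d := by
      rw [← Real.sqrt_mul (by norm_num)]
      exact Real.sqrt_le_sqrt hn2d
    calc (n:ℝ) = Real.sqrt n * Real.sqrt n := hmss.symm
      _ ≤ (Real.sqrt 2 * Real.sqrt d) * Real.sqrt n :=
          mul_le_mul_of_nonneg_right e3 hsqn.le
      _ = Real.sqrt 2 * (Real.sqrt n * Real.sqrt d) := by ring
      _ ≤ 2 * (Real.sqrt n * Real.sqrt d) :=
          mul_le_mul_of_nonneg_right hsqrt2 (by positivity)
  have hT5pos : (0:ℝ) < (2:ℝ)^(n-K) * S / (M * Bs) := lt_of_lt_of_le one_pos hT5lb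
  have hT4pos : (0:ℝ) < ((n:ℝ)-(d:ℝ))/((n:ℝ)-(K:ℝ)) := lt_of_lt_of_le hβ1 hT4lb
  constructor
  · rw [hVeq]
    calc β1/81 ≤ ((1/9)/Real.sqrt n) * ((1/9)/Real.sqrt d) * ((n:ℝ) * β1 * 1) := by
          have e : ((1:ℝ)/9/Real.sqrt n) * ((1/9)/Real.sqrt d) * ((n:ℝ) * β1 * 1)
              = β1*((n:ℝ)/(Real.sqrt n*Real.sqrt d))/81 := by
            field_simp
            ring
          rw [e]
          have h7 := mul_le_mul_of_nonneg_left hq1 hβ1.le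
          rw [mul_one] at h7
          have h8 : (0:ℝ) < 81 := by norm_num
          exact (div_le_div_iff_of_pos_right h8).2 h7
      _ ≤ P1 * P2 * ((n:ℝ) * (((n:ℝ)-(d:ℝ))/((n:ℝ)-(K:ℝ))) * ((2:ℝ)^(n-K) * S / (M * Bs))) := by
          apply mul_le_mul
          · apply mul_le_mul hP1.1 hP2.1 (by positivity) hP1pos.le
          · apply mul_le_mul
            · apply mul_le_mul_of_nonneg_left hT4lb hnR.le
            · exact hT5lb
            · norm_num
            · positivity
          · positivity
          · positivity
  · rw [hVeq]
    calc P1 * P2 * ((n:ℝ) * (((n:ℝ)-(d:ℝ))/((n:ℝ)-(K:ℝ))) * ((2:ℝ)^(n-K) * S / (M * Bs)))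
        ≤ ((3/β1)/Real.sqrt n) * ((3/β2)/Real.sqrt d) * ((n:ℝ) * 1 * (4/(1-r))) := by
          apply mul_le_mul
          · apply mul_le_mul hP1.2 hP2.2 hP2pos.le (by positivity)
          · apply mul_le_mul
            · apply mul_le_mul_of_nonneg_left hT4ub hnR.le
            · exact hT5ub
            · exact hT5pos.le
            · positivity
          · positivity
          · positivity
      _ ≤ 72/(β1*β2*(1-r)) := by
          have e : ((3:ℝ)/β1/Real.sqrt n) * ((3/β2)/Real.sqrt d) * ((n:ℝ) * 1 * (4/(1-r)))
              = 36*((n:ℝ)/(Real.sqrt n*Real.sqrt d))/(β1*β2*(1-r)) := by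
            field_simp
            ring
          rw [e]
          have hden : (0:ℝ) < β1*β2*(1-r) := by
            apply mul_pos (mul_pos hβ1 hβ2)
            linarith
          have h36 : 36*((n:ℝ)/(Real.sqrt n*Real.sqrt d)) ≤ 72 := by linarith
          exact (div_le_div_iff_of_pos_right hden).2 h36


lemma stirling_evt : ∃ n0 : ℕ, ∀ a, n0 ≤ a →
    1 ≤ Stirling.stirlingSeq a ∧ Stirling.stirlingSeq a ≤ 3 := by
  have h := Stirling.tendsto_stirlingSeq_sqrt_pi
  have hmem : Set.Icc (1:ℝ) 3 ∈ 𝓝 (Real.sqrt π) := by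
    apply Icc_mem_nhds
    · have hπ : (1:ℝ) < π := by nlinarith [Real.pi_gt_three]
      calc (1:ℝ) = Real.sqrt 1 := Real.sqrt_one.symm
        _ < Real.sqrt π := Real.sqrt_lt_sqrt (by norm_num) hπ
    · have hπ : π < 9 := by nlinarith [Real.pi_lt_d2]
      calc Real.sqrt π < Real.sqrt 9 := Real.sqrt_lt_sqrt (le_of_lt Real.pi_pos) hπ
        _ = 3 := by rw [show (9:ℝ) = 3^2 by norm_num, Real.sqrt_sq (by norm_num)]
  have h2 : ∀ᶠ a in atTop, Stirling.stirlingSeq a ∈ Set.Icc (1:ℝ) 3 := h hmem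
  rw [Filter.eventually_atTop] at h2
  obtain ⟨n0, hn0⟩ := h2
  exact ⟨n0, fun a ha => ⟨(hn0 a ha).1, (hn0 a ha).2⟩⟩

lemma binEnt_tendsto {f : ℕ → ℝ} {c : ℝ} (hc0 : c ≠ 0) (hc1 : c ≠ 1)
    (hf : Tendsto f atTop (𝓝 c)) :
    Tendsto (fun d => binEnt (f d)) atTop (𝓝 (binEnt c)) := by
  have hl1 : Tendsto (fun d => Real.log (f d)) atTop (𝓝 (Real.log c)) :=
    (Real.continuousAt_log hc0).tendsto.comp hf
  have hl2 : Tendsto (fun d => Real.log (1 - f d)) atTop (𝓝 (Real.log (1 - c))) :=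
    (Real.continuousAt_log (by intro h; apply hc1; linarith [sub_eq_zero.1 h])).tendsto.comp
      (tendsto_const_nhds.sub hf)
  unfold binEnt
  exact ((hf.neg.mul hl1).sub ((tendsto_const_nhds.sub hf).mul hl2))

set_option maxHeartbeats 2000000 in
theorem cover_efron_difference (δ ρ : ℝ) (hδ : 1 / 2 < δ) (hδ1 : δ < 1)
    (hρ0 : 0 < ρ) (hρ : ρ < 2 - 1 / δ)
    (k N : ℕ → ℕ) (hkN : ∀ᶠ d in atTop, k d < d ∧ d < N d)
    (h1 : Tendsto (fun d : ℕ => (d : ℝ) / (N d : ℝ)) atTop (𝓝 δ))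
    (h2 : Tendsto (fun d : ℕ => (k d : ℝ) / (d : ℝ)) atTop (𝓝 ρ)) :
    (∃ a b : ℝ, 0 < a ∧ a ≤ b ∧ ∃ D : ℕ, ∀ d ≥ D,
      a ≤ (N d : ℝ) * Real.exp (-(N d : ℝ) * Gfun ((d : ℝ) / (N d : ℝ)) ((k d : ℝ) / (d : ℝ))) *
          DeltaC k N d ∧
      (N d : ℝ) * Real.exp (-(N d : ℝ) * Gfun ((d : ℝ) / (N d : ℝ)) ((k d : ℝ) / (d : ℝ))) *
          DeltaC k N d ≤ b) ∧
    (Gfun δ ρ < 0 → Tendsto (fun d : ℕ => DeltaC k N d) atTop (𝓝 0)) ∧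
    (0 < Gfun δ ρ → Tendsto (fun d : ℕ => DeltaC k N d) atTop atTop) := by
  obtain ⟨n0, hst⟩ := stirling_evt
  have hδ0 : (0:ℝ) < δ := by linarith
  have hρ1 : ρ < 1 := by
    have h1δ : (1:ℝ) < 1/δ := by rw [lt_div_iff₀ hδ0]; linarith
    linarith
  set β1 := min δ (1-δ) / 2 with hβ1def
  set β2 := min ρ (1-ρ) / 2 with hβ2def
  have hβ1pos : 0 < β1 := div_pos (lt_min hδ0 (by linarith)) two_pos
  have hβ2pos : 0 < β2 := div_pos (lt_min hρ0 (by linarith)) two_pos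
  have hβ1δ : β1 < δ := by
    have hm : min δ (1-δ) ≤ δ := min_le_left _ _
    rw [hβ1def]; linarith
  have hβ1δ' : δ < 1 - β1 := by
    have hm : min δ (1-δ) ≤ 1-δ := min_le_right _ _
    rw [hβ1def]; linarith
  have hβ2ρ : β2 < ρ := by
    have hm : min ρ (1-ρ) ≤ ρ := min_le_left _ _
    rw [hβ2def]; linarith
  have hβ2ρ' : ρ < 1 - β2 := by
    have hm : min ρ (1-ρ) ≤ 1-ρ := min_le_right _ _
    rw [hβ2def]; linarith
  have hβ1half : β1 ≤ 1/2 := by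
    have hm : min δ (1-δ) ≤ 1 := le_trans (min_le_left _ _) (by linarith)
    rw [hβ1def]; linarith
  have hβ2half : β2 ≤ 1/2 := by
    have hm : min ρ (1-ρ) ≤ 1 := le_trans (min_le_left _ _) (by linarith)
    rw [hβ2def]; linarith
  set R0 := (1-δ)/(δ*(1-ρ)) with hR0def
  have hden : (0:ℝ) < δ*(1-ρ) := mul_pos hδ0 (by linarith)
  have hR0pos : 0 < R0 := div_pos (by linarith) hden
  have hR0lt1 : R0 < 1 := by
    rw [hR0def, div_lt_one hden]
    have ha2 : δ * ρ < δ * (2 - 1/δ) := mul_lt_mul_of_pos_left hρ hδ0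
    have ha3 : δ * (2 - 1/δ) = 2*δ - 1 := by field_simp
    nlinarith
  set r := (R0 + 1)/2 with hrdef
  have hr0 : 0 < r := by rw [hrdef]; linarith
  have hr1 : r < 1 := by rw [hrdef]; linarith
  have hR0r : R0 < r := by rw [hrdef]; linarith
  -- limit machinery
  have hdR : Tendsto (fun d : ℕ => (d:ℝ)) atTop atTop := tendsto_natCast_atTop_atTop
  have hNge : ∀ᶠ d : ℕ in atTop, (d:ℝ) ≤ (N d : ℝ) :=
    hkN.mono (fun d h => by exact_mod_cast le_of_lt h.2)
  have hNR : Tendsto (fun d : ℕ => (N d : ℝ)) atTop atTop :=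
    tendsto_atTop_mono' atTop hNge hdR
  have hKR : Tendsto (fun d : ℕ => (k d : ℝ)) atTop atTop := by
    apply Tendsto.congr' _ ((h2.pos_mul_atTop hρ0) hdR)
    filter_upwards [eventually_gt_atTop 0] with d hd
    have : (d:ℝ) ≠ 0 := by positivity
    field_simp
  have hdKR : Tendsto (fun d : ℕ => (d:ℝ) - (k d : ℝ)) atTop atTop := by
    apply Tendsto.congr' _ (((tendsto_const_nhds.sub h2).pos_mul_atTop (by linarith : (0:ℝ) < 1-ρ)) hdR)
    filter_upwards [eventually_gt_atTop 0] with d hd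
    have : (d:ℝ) ≠ 0 := by positivity
    field_simp
    try ring
  have hNpos : ∀ᶠ d in atTop, (0:ℝ) < (N d : ℝ) := by
    filter_upwards [hNge, eventually_gt_atTop 0] with d ha hb
    have : (0:ℝ) < (d:ℝ) := by exact_mod_cast hb
    linarith
  have hNdR : Tendsto (fun d : ℕ => (N d : ℝ) - (d:ℝ)) atTop atTop := by
    apply Tendsto.congr' _ (((tendsto_const_nhds.sub h1).pos_mul_atTop (by linarith : (0:ℝ) < 1-δ)) hNR)
    filter_upwards [hNpos] with d hd
    have : (N d:ℝ) ≠ 0 := ne_of_gt hd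
    field_simp
    try ring
  have hratio : Tendsto (fun d : ℕ => ((N d:ℝ) - (d:ℝ))/((d:ℝ) - (k d:ℝ))) atTop (𝓝 R0) := by
    have hNd : Tendsto (fun d : ℕ => ((d:ℝ)/(N d:ℝ))⁻¹) atTop (𝓝 δ⁻¹) :=
      h1.inv₀ (ne_of_gt hδ0)
    have hyinv : Tendsto (fun d : ℕ => (1 - (k d:ℝ)/(d:ℝ))⁻¹) atTop (𝓝 (1-ρ)⁻¹) :=
      (tendsto_const_nhds.sub h2).inv₀ (sub_ne_zero.2 hρ1.ne')
    have hcomb := (hNd.sub_const 1).mul hyinv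
    have hval : (δ⁻¹ - 1) * (1-ρ)⁻¹ = R0 := by
      rw [hR0def]
      field_simp
      try ring
    rw [hval] at hcomb
    apply Tendsto.congr' _ hcomb
    filter_upwards [hkN, eventually_gt_atTop 0, hNpos] with d hk hd hN
    have hdne : (d:ℝ) ≠ 0 := by positivity
    have hNne : (N d:ℝ) ≠ 0 := ne_of_gt hN
    have hkd : (k d:ℝ) < (d:ℝ) := by exact_mod_cast hk.1
    have hdkne : (d:ℝ) - (k d:ℝ) ≠ 0 := by linarith
    rw [inv_div]
    field_simp
    try ring
  -- eventual conditions
  have evG : ∀ᶠ d in atTop,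
      β1/81 ≤ (N d : ℝ) * Real.exp (-(N d : ℝ) * Gfun ((d : ℝ) / (N d : ℝ)) ((k d : ℝ) / (d : ℝ))) *
          DeltaC k N d ∧
      (N d : ℝ) * Real.exp (-(N d : ℝ) * Gfun ((d : ℝ) / (N d : ℝ)) ((k d : ℝ) / (d : ℝ))) *
          DeltaC k N d ≤ 72/(β1*β2*(1-r)) := by
    filter_upwards [hkN, eventually_gt_atTop 0,
      hKR.eventually_ge_atTop 1,
      h1.eventually (eventually_gt_nhds hδ),
      h1.eventually (eventually_gt_nhds hβ1δ),
      h1.eventually (eventually_lt_nhds hβ1δ'),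
      h2.eventually (eventually_gt_nhds hβ2ρ),
      h2.eventually (eventually_lt_nhds hβ2ρ'),
      hratio.eventually (eventually_lt_nhds hR0r),
      hKR.eventually_ge_atTop (n0:ℝ),
      hdKR.eventually_ge_atTop (n0:ℝ),
      hNdR.eventually_ge_atTop (n0:ℝ)] with d hkd hd0 hK1 hxhalf hxb1 hxb1' hyb2 hyb2' hratlt hn0K hn0dK hn0nd
    have hK := hkd.1
    have hdN := hkd.2
    have hdR' : (0:ℝ) < (d:ℝ) := by exact_mod_cast hd0
    have hNR' : (0:ℝ) < (N d:ℝ) := by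
      have : (0:ℕ) < N d := by omega
      exact_mod_cast this
    have hkdR : (k d:ℝ) < (d:ℝ) := by exact_mod_cast hK
    have hdNR : (d:ℝ) < (N d:ℝ) := by exact_mod_cast hdN
    have hK1' : 1 ≤ k d := by exact_mod_cast hK1
    -- convert ratio conditions
    have hn2d : (N d:ℝ) ≤ 2*(d:ℝ) := by
      have := (lt_div_iff₀ hNR').1 hxhalf
      linarith
    have hb1 : β1*(N d:ℝ) ≤ (d:ℝ) := by
      have := (lt_div_iff₀ hNR').1 hxb1
      linarith
    have hb1' : β1*(N d:ℝ) ≤ (N d:ℝ)-(d:ℝ) := by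
      have := (div_lt_iff₀ hNR').1 hxb1'
      nlinarith
    have hb2 : β2*(d:ℝ) ≤ (k d:ℝ) := by
      have := (lt_div_iff₀ hdR').1 hyb2
      linarith
    have hb2' : β2*(d:ℝ) ≤ (d:ℝ)-(k d:ℝ) := by
      have := (div_lt_iff₀ hdR').1 hyb2'
      nlinarith
    have hrat : ((N d:ℝ)-(d:ℝ)) ≤ r * ((d:ℝ)-(k d:ℝ)) := by
      rw [div_lt_iff₀ (by linarith : (0:ℝ) < (d:ℝ)-(k d:ℝ))] at hratlt
      linarith
    have hn0K' : n0 ≤ k d := by exact_mod_cast hn0K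
    have hn0dK' : n0 ≤ d - k d := by
      have hcast : ((d - k d:ℕ):ℝ) = (d:ℝ)-(k d:ℝ) := by
        push_cast [Nat.cast_sub (le_of_lt hK)]; ring
      have : (n0:ℝ) ≤ ((d - k d:ℕ):ℝ) := by rw [hcast]; exact hn0dK
      exact_mod_cast this
    have hn0nd' : n0 ≤ N d - d := by
      have hcast : ((N d - d:ℕ):ℝ) = (N d:ℝ)-(d:ℝ) := by
        push_cast [Nat.cast_sub (le_of_lt hdN)]; ring
      have : (n0:ℝ) ≤ ((N d - d:ℕ):ℝ) := by rw [hcast]; exact hn0nd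
      exact_mod_cast this
    have := main_bound (k d) d (N d) n0 β1 β2 r hst hβ1pos hβ2pos hr0 hr1
      hK hdN hK1' hn2d hb1 hb1' hb2 hb2' hrat hn0K' hn0dK' hn0nd'
    rw [DeltaC]
    exact this
  -- final assembly
  set a := β1/81 with hadef
  set b := 72/(β1*β2*(1-r)) with hbdef
  have hapos : 0 < a := by rw [hadef]; positivity
  have hdenpos : (0:ℝ) < β1*β2*(1-r) := by
    apply mul_pos (mul_pos hβ1pos hβ2pos)
    linarith
  have hab : a ≤ b := by
    have hd1 : β1*β2*(1-r) ≤ 1 := by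
      have e1 : β1*β2 ≤ 1 := by nlinarith [hβ1pos, hβ2pos, hβ1half, hβ2half]
      have e2 : (0:ℝ) ≤ 1-r := by linarith
      have e3 : 1-r ≤ 1 := by linarith
      exact mul_le_one₀ e1 e2 e3
    have h72 : (72:ℝ) ≤ b := by
      rw [hbdef, le_div_iff₀ hdenpos]
      nlinarith
    have ha1 : a ≤ 1 := by rw [hadef]; linarith
    linarith
  have hGc : Tendsto (fun d : ℕ => Gfun ((d:ℝ)/(N d:ℝ)) ((k d:ℝ)/(d:ℝ))) atTop
      (𝓝 (Gfun δ ρ)) := by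
    have hbe1 := binEnt_tendsto (ne_of_gt hδ0) (ne_of_lt hδ1) h1
    have hbe2 := binEnt_tendsto (ne_of_gt hρ0) (ne_of_lt hρ1) h2
    unfold Gfun
    exact (hbe1.add (h1.mul hbe2)).sub
      ((tendsto_const_nhds.sub (h1.mul h2)).mul_const (Real.log 2))
  refine ⟨⟨a, b, hapos, hab, eventually_atTop.1 evG⟩, ?_, ?_⟩
  · -- Gfun δ ρ < 0
    intro hΓ
    have hhalf : ∀ᶠ d : ℕ in atTop,
        Gfun ((d:ℝ)/(N d:ℝ)) ((k d:ℝ)/(d:ℝ)) < Gfun δ ρ/2 :=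
      hGc.eventually (eventually_lt_nhds (show Gfun δ ρ < Gfun δ ρ/2 by linarith))
    have hbnonneg : (0:ℝ) ≤ b := by linarith
    have hub : ∀ᶠ d : ℕ in atTop,
        DeltaC k N d ≤ b * Real.exp ((N d:ℝ) * (Gfun δ ρ/2)) ∧ 0 ≤ DeltaC k N d := by
      filter_upwards [evG, hhalf, hNpos, hNR.eventually_ge_atTop 1] with d hev hh hN hN1
      have hppos : 0 < (N d:ℝ) * Real.exp (-(N d:ℝ) * Gfun ((d:ℝ)/(N d:ℝ)) ((k d:ℝ)/(d:ℝ))) := by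
        positivity
      constructor
      · have hΔ : DeltaC k N d
            ≤ b * Real.exp ((N d:ℝ) * Gfun ((d:ℝ)/(N d:ℝ)) ((k d:ℝ)/(d:ℝ))) / (N d:ℝ) := by
          rw [le_div_iff₀ hN]
          calc DeltaC k N d * (N d:ℝ)
              = ((N d:ℝ) * Real.exp (-(N d:ℝ) * Gfun ((d:ℝ)/(N d:ℝ)) ((k d:ℝ)/(d:ℝ)))
                  * DeltaC k N d) * Real.exp ((N d:ℝ) * Gfun ((d:ℝ)/(N d:ℝ)) ((k d:ℝ)/(d:ℝ))) := by
                rw [neg_mul, Real.exp_neg]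
                field_simp
            _ ≤ b * Real.exp ((N d:ℝ) * Gfun ((d:ℝ)/(N d:ℝ)) ((k d:ℝ)/(d:ℝ))) :=
                mul_le_mul_of_nonneg_right hev.2 (Real.exp_pos _).le
        calc DeltaC k N d
            ≤ b * Real.exp ((N d:ℝ) * Gfun ((d:ℝ)/(N d:ℝ)) ((k d:ℝ)/(d:ℝ))) / (N d:ℝ) := hΔ
          _ ≤ b * Real.exp ((N d:ℝ) * Gfun ((d:ℝ)/(N d:ℝ)) ((k d:ℝ)/(d:ℝ))) :=
              div_le_self (by positivity) hN1
          _ ≤ b * Real.exp ((N d:ℝ) * (Gfun δ ρ/2)) := by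
              apply mul_le_mul_of_nonneg_left _ hbnonneg
              apply Real.exp_le_exp.2
              apply mul_le_mul_of_nonneg_left (le_of_lt hh) hN.le
      · by_contra hc
        push_neg at hc
        have hneg := mul_neg_of_pos_of_neg hppos hc
        linarith [hev.1]
    have hlim : Tendsto (fun d : ℕ => b * Real.exp ((N d:ℝ) * (Gfun δ ρ/2))) atTop (𝓝 0) := by
      have h3 : Tendsto (fun d : ℕ => (N d:ℝ) * (Gfun δ ρ/2)) atTop atBot :=
        hNR.atTop_mul_const_of_neg (show Gfun δ ρ/2 < 0 by linarith)
      have h4 := Real.tendsto_exp_atBot.comp h3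
      have h5 := h4.const_mul b
      simpa using h5
    apply tendsto_of_tendsto_of_tendsto_of_le_of_le' tendsto_const_nhds hlim
    · exact hub.mono (fun d h => h.2)
    · exact hub.mono (fun d h => h.1)
  · -- 0 < Gfun δ ρ
    intro hΓ
    have hhalf : ∀ᶠ d : ℕ in atTop,
        Gfun δ ρ/2 < Gfun ((d:ℝ)/(N d:ℝ)) ((k d:ℝ)/(d:ℝ)) :=
      hGc.eventually (eventually_gt_nhds (show Gfun δ ρ/2 < Gfun δ ρ by linarith))
    have hlb : ∀ᶠ d : ℕ in atTop,
        a * Real.exp ((N d:ℝ)*(Gfun δ ρ/2)) / (N d:ℝ) ≤ DeltaC k N d := by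
      filter_upwards [evG, hhalf, hNpos] with d hev hh hN
      have hΔ : a * Real.exp ((N d:ℝ) * Gfun ((d:ℝ)/(N d:ℝ)) ((k d:ℝ)/(d:ℝ))) / (N d:ℝ)
          ≤ DeltaC k N d := by
        rw [div_le_iff₀ hN]
        calc a * Real.exp ((N d:ℝ) * Gfun ((d:ℝ)/(N d:ℝ)) ((k d:ℝ)/(d:ℝ)))
            ≤ ((N d:ℝ) * Real.exp (-(N d:ℝ) * Gfun ((d:ℝ)/(N d:ℝ)) ((k d:ℝ)/(d:ℝ)))
                * DeltaC k N d) * Real.exp ((N d:ℝ) * Gfun ((d:ℝ)/(N d:ℝ)) ((k d:ℝ)/(d:ℝ))) :=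
              mul_le_mul_of_nonneg_right hev.1 (Real.exp_pos _).le
          _ = DeltaC k N d * (N d:ℝ) := by
              rw [neg_mul, Real.exp_neg]
              field_simp
      refine le_trans ?_ hΔ
      apply (div_le_div_iff_of_pos_right hN).2
      apply mul_le_mul_of_nonneg_left _ hapos.le
      apply Real.exp_le_exp.2
      apply mul_le_mul_of_nonneg_left (le_of_lt hh) hN.le
    have hlim : Tendsto (fun d : ℕ => a * Real.exp ((N d:ℝ)*(Gfun δ ρ/2)) / (N d:ℝ))
        atTop atTop := by
      have hz : Tendsto (fun d : ℕ => (N d:ℝ)*(Gfun δ ρ/2)) atTop atTop :=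
        hNR.atTop_mul_const (show (0:ℝ) < Gfun δ ρ/2 by linarith)
      have hbase : Tendsto (fun z : ℝ => Real.exp z / z) atTop atTop := by
        simpa using Real.tendsto_exp_div_pow_atTop 1
      have hcomp := hbase.comp hz
      have hconst := hcomp.const_mul_atTop
        (show (0:ℝ) < a*(Gfun δ ρ/2) from mul_pos hapos (by linarith))
      apply Tendsto.congr' _ hconst
      filter_upwards [hNpos] with d hN
      have h6 : (N d:ℝ) ≠ 0 := ne_of_gt hN
      have h7 : Gfun δ ρ ≠ 0 := ne_of_gt hΓ
      simp only [Function.comp]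
      field_simp
    exact tendsto_atTop_mono' atTop hlb hlim
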